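/- arXiv:2111.06775 — 9 statements merged into one kernel-verified Lean document; each statement's English description precedes it below -/
import Mathlib

section
/- Let U ⊆ ℝⁿ be open, let x⁰ ∈ U, let g : U → ℝ be continuous and let g₁, …, g_k : U → ℝ be C¹ functions with g(x) ∈ {g₁(x), …, g_k(x)} for all x ∈ U. Assume: (i) g_i(x⁰) = g(x⁰) for all i ∈ {1,…,k}; (ii) I^e(x) = I(x) for all x ∈ U; (iii) the affine dimension of affineSpan({∇g_i(x) : i ∈ {1,…,k}}) equals d := affdim(affineSpan({∇g_i(x⁰) : i ∈ {1,…,k}})) for every x ∈ U. Let i₁, …, i_{d+1} ∈ {1,…,k} be indices such that {∇g_{i₁}(x⁰), …, ∇g_{i_{d+1}}(x⁰)} is an affinely independent set (hence an affine basis of affineSpan({∇g_i(x⁰) : i ∈ {1,…,k}})). Then there exists an open neighborhood U' ⊆ U of x⁰ such that for all x ∈ U': (g_i(x) − g₁(x) = 0 for all i ∈ {2,…,k}) if and only if (g_{i_j}(x) − g_{i₁}(x) = 0 for all j ∈ {2,…,d+1}); in particular {x ∈ U' : I^e(x) = {1,…,k}} = {x ∈ U' : g_{i_j}(x) − g_{i₁}(x)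 = 0 for all j ∈ {2,…,d+1}}. -/
/-!
Near `x⁰` the differences `ψ j = g_{i_j} - g_{i_1}` have linearly independent differentials, so
by the inverse function theorem there is a chart `H` around `x⁰` in which they become linear
functionals `ℓ j`. Constant dimension of the affine hull of the gradients puts the differential of
every `g_i - g_{i_1}` into the span of those of the `ψ j`, so in the chart it vanishes on
`⋂ ker ℓ j`. If all `ψ j x = 0`, the segment from `H x⁰` to `H x` points into `⋂ ker ℓ j`, and the
mean value theorem along it gives `g_i x - g_{i_1} x = 0`.
-/

open Set Filter Topology InnerProductSpace

section Dual

variable {𝕜 E : Type*} [NontriviallyNormedField 𝕜] [NormedAddCommGroup E] [NormedSpace 𝕜 E]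

theorem LinearIndependent.exists_apply_eq_ite {ι : Type*} [Fintype ι] [DecidableEq ι]
    {ℓ : ι → StrongDual 𝕜 E} (hℓ : LinearIndependent 𝕜 ℓ) :
    ∃ v : ι → E, ∀ i j, ℓ i (v j) = if i = j then 1 else 0 := by
  have hcoe : LinearIndependent 𝕜 fun i => ⇑(ℓ i) :=
    hℓ.map' (LinearMap.ltoFun 𝕜 E 𝕜 𝕜 ∘ₗ ContinuousLinearMap.coeLM 𝕜) <| LinearMap.ker_eq_bot.mpr
      fun _ _ h => ContinuousLinearMap.coe_injective (DFunLike.coe_injective h)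
  let L : E →ₗ[𝕜] ι → 𝕜 := LinearMap.pi fun i => (ℓ i : E →ₗ[𝕜] 𝕜)
  have hL : Function.Surjective L := by
    rw [← LinearMap.range_eq_top, ← Submodule.span_eq (LinearMap.range L),
      ← span_flip_eq_top_iff_linearIndependent.mpr hcoe]
    rfl
  choose v hv using fun j => hL (Pi.single j 1)
  refine ⟨v, fun i j => ?_⟩
  simpa [L, Pi.single_apply] using congrFun (hv j) i

theorem ContinuousLinearMap.apply_eq_zero_of_mem_span {ι : Type*} {ℓ : ι → StrongDual 𝕜 E}
    {f : StrongDual 𝕜 E} (hf : f ∈ Submodule.span 𝕜 (range ℓ)) {u : E} (hu : ∀ i, ℓ i u = 0) :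
    f u = 0 :=
  Submodule.span_le (p := LinearMap.ker (apply 𝕜 𝕜 u : StrongDual 𝕜 E →ₗ[𝕜] 𝕜)).mpr
    (range_subset_iff.mpr hu) hf

end Dual

theorem AffineIndependent.vsub_mem_span_vsub_of_card_eq_finrank_add_one {k V P : Type*}
    [DivisionRing k] [AddCommGroup V] [Module k V] [AddTorsor V P] [FiniteDimensional k V]
    {ι κ : Type*} [Fintype κ] {p : ι → P} {f : κ → ι} (hi : AffineIndependent k (p ∘ f))
    (hc : Fintype.card κ = Module.finrank k (affineSpan k (range p)).direction + 1)
    (i : ι) (j₀ : κ) :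
    p i -ᵥ p (f j₀) ∈ Submodule.span k (range fun j : {j // j ≠ j₀} => p (f j) -ᵥ p (f j₀)) := by
  have hspan : affineSpan k (range (p ∘ f)) = affineSpan k (range p) :=
    hi.affineSpan_eq_of_le_of_card_eq_finrank_add_one
      (affineSpan_mono k (range_comp_subset_range f p)) hc
  have hvec := congrArg AffineSubspace.direction hspan
  rw [direction_affineSpan, direction_affineSpan] at hvec
  show p i -ᵥ p (f j₀) ∈
    Submodule.span k (range fun j : {j // j ≠ j₀} => (p ∘ f) j -ᵥ (p ∘ f) j₀)
  rw [← vectorSpan_range_eq_span_range_vsub_right_ne k (p ∘ f) j₀, hvec]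
  exact vsub_mem_vectorSpan k (mem_range_self i) (mem_range_self (f j₀))

section Straightening

variable {E : Type*} [NormedAddCommGroup E] [NormedSpace ℝ E] [CompleteSpace E]
  {ι : Type*} [Fintype ι] {ψ : ι → E → ℝ} {x₀ : E}

theorem exists_openPartialHomeomorph_fderiv_apply_eq (hψ : ∀ j, ContDiffAt ℝ 1 (ψ j) x₀)
    (hli : LinearIndependent ℝ fun j => fderiv ℝ (ψ j) x₀) :
    ∃ H : OpenPartialHomeomorph E E, x₀ ∈ H.source ∧ (∀ x j, fderiv ℝ (ψ j) x₀ (H x) = ψ j x) ∧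
      ∀ᶠ y in 𝓝 (H x₀), DifferentiableAt ℝ H.symm y := by
  classical
  set ℓ := fun j => fderiv ℝ (ψ j) x₀
  obtain ⟨v, hv⟩ := hli.exists_apply_eq_ite
  -- The correction term makes `ℓ ∘ G = ψ` (as `ℓ i (v j) = δᵢⱼ`) while keeping `G'(x₀) = id`.
  set G : E → E := fun x => x + ∑ j, (ψ j x - ℓ j x) • v j
  have hGψ : ∀ x i, ℓ i (G x) = ψ i x := by
    intro x i
    simp [G, hv]
  have hG : ContDiffAt ℝ 1 G x₀ :=
    contDiffAt_id.add <| ContDiffAt.sum fun j _ =>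
      ((hψ j).sub (ℓ j).contDiff.contDiffAt).smul contDiffAt_const
  have hG' : HasFDerivAt G (ContinuousLinearEquiv.refl ℝ E : E →L[ℝ] E) x₀ := by
    have : HasFDerivAt G
        (ContinuousLinearMap.id ℝ E + ∑ j, (fderiv ℝ (ψ j) x₀ - ℓ j).smulRight (v j)) x₀ :=
      (hasFDerivAt_id x₀).add <| HasFDerivAt.fun_sum fun j _ =>
        (((hψ j).differentiableAt one_ne_zero).hasFDerivAt.sub (ℓ j).hasFDerivAt).smul_const (v j)
    simpa [ℓ] using this
  refine ⟨hG.toOpenPartialHomeomorph G hG' one_ne_zero,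
    hG.mem_toOpenPartialHomeomorph_source hG' one_ne_zero, ?_, ?_⟩
  · rw [hG.toOpenPartialHomeomorph_coe]
    exact hGψ
  · rw [hG.toOpenPartialHomeomorph_coe]
    filter_upwards [(hG.to_localInverse hG' one_ne_zero).eventually (by simp)] with y hy
    exact hy.differentiableAt one_ne_zero

theorem eventually_eq_of_forall_eq_of_fderiv_mem_span {φ : E → ℝ}
    (hψ : ∀ j, ContDiffAt ℝ 1 (ψ j) x₀) (hli : LinearIndependent ℝ fun j => fderiv ℝ (ψ j) x₀)
    (hφ : ∀ᶠ x in 𝓝 x₀, DifferentiableAt ℝ φ x ∧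
      fderiv ℝ φ x ∈ Submodule.span ℝ (range fun j => fderiv ℝ (ψ j) x)) :
    ∀ᶠ x in 𝓝 x₀, (∀ j, ψ j x = ψ j x₀) → φ x = φ x₀ := by
  obtain ⟨H, hx₀, hHψ, hdiff⟩ := exists_openPartialHomeomorph_fderiv_apply_eq hψ hli
  set ℓ := fun j => fderiv ℝ (ψ j) x₀
  have hψdiff : ∀ᶠ x in 𝓝 x₀, ∀ j, DifferentiableAt ℝ (ψ j) x :=
    eventually_all.mpr fun j =>
      ((hψ j).eventually (by simp)).mono fun x hx => hx.differentiableAt one_ne_zero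
  have hsymm : Tendsto H.symm (𝓝 (H x₀)) (𝓝 x₀) := by
    simpa [ContinuousAt, H.left_inv hx₀] using H.continuousAt_symm (H.map_source hx₀)
  have hflat : ∀ᶠ y in 𝓝 (H x₀), HasFDerivAt (φ ∘ H.symm) (fderiv ℝ (φ ∘ H.symm) y) y ∧
      ∀ u, (∀ j, ℓ j u = 0) → fderiv ℝ (φ ∘ H.symm) y u = 0 := by
    filter_upwards [hsymm.eventually hφ, hsymm.eventually hψdiff, hdiff,
      H.open_target.mem_nhds (H.map_source hx₀)] with y ⟨hφy, hspan⟩ hψy hHy hy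
    have hchain := hφy.hasFDerivAt.comp y hHy.hasFDerivAt
    refine ⟨hchain.differentiableAt.hasFDerivAt, fun u hu => ?_⟩
    rw [hchain.fderiv]
    refine ContinuousLinearMap.apply_eq_zero_of_mem_span hspan fun j => ?_
    have hlin : HasFDerivAt (ψ j ∘ H.symm) (ℓ j) y := by
      refine (ℓ j).hasFDerivAt.congr_of_eventuallyEq ?_
      filter_upwards [H.eventually_right_inverse hy] with z hz
      simp [ℓ, ← hHψ, hz]
    have := ((hψy j).hasFDerivAt.comp y hHy.hasFDerivAt).unique hlin
    simpa [hu] using congrArg (· u) this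
  obtain ⟨ε, hε, hball⟩ := Metric.eventually_nhds_iff_ball.mp hflat
  filter_upwards [H.open_source.mem_nhds hx₀, H.continuousAt hx₀ (Metric.ball_mem_nhds _ hε)]
    with x hx hxball hψx
  obtain ⟨z, hz, hmvt⟩ := domain_mvt (fun y hy => (hball y hy).1.hasFDerivWithinAt)
    (convex_ball _ _) (Metric.mem_ball_self hε) hxball
  have hz0 := (hball z ((convex_ball _ _).segment_subset (Metric.mem_ball_self hε) hxball hz)).2
    (H x - H x₀) fun j => by simp [ℓ, hHψ, hψx j]
  simpa [H.left_inv hx, H.left_inv hx₀, hz0, sub_eq_zero] using hmvt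

end Straightening

section Gradient

variable {F : Type*} [NormedAddCommGroup F] [InnerProductSpace ℝ F] [CompleteSpace F]

theorem fderiv_sub_eq_toDual_gradient_sub {f g : F → ℝ} {x : F} (hf : DifferentiableAt ℝ f x)
    (hg : DifferentiableAt ℝ g x) :
    fderiv ℝ (fun y => f y - g y) x = toDual ℝ F (gradient f x - gradient g x) := by
  rw [fderiv_fun_sub hf hg, map_sub, toDual_gradient, toDual_gradient]

theorem toDual_mem_span_of_mem_span {ι : Type*} {v : ι → F} {w : F}
    (h : w ∈ Submodule.span ℝ (range v)) :
    toDual ℝ F w ∈ Submodule.span ℝ (range fun i => toDual ℝ F (v i)) := by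
  have := Submodule.mem_map_of_mem (f := (toDual ℝ F).toLinearEquiv.toLinearMap) h
  rwa [Submodule.map_span, ← range_comp] at this

theorem eventually_forall_eq_of_affineIndependent_gradient [FiniteDimensional ℝ F]
    {ι : Type*} [Fintype ι] {U : Set F} (hU : IsOpen U) {x₀ : F} (hx₀ : x₀ ∈ U)
    {gs : ι → F → ℝ} (hgs : ∀ i, ContDiffOn ℝ 1 (gs i) U) {c : ℝ} (hc : ∀ i, gs i x₀ = c)
    {d : ℕ} (hdim : ∀ x ∈ U,
      Module.finrank ℝ (affineSpan ℝ (range fun i => gradient (gs i) x)).direction = d)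
    {idx : Fin (d + 1) → ι} (hidx : AffineIndependent ℝ fun j => gradient (gs (idx j)) x₀) :
    ∀ᶠ x in 𝓝 x₀, (∀ j, gs (idx j) x = gs (idx 0) x) → ∀ i, gs i x = gs (idx 0) x := by
  have hdiff : ∀ i, ∀ x ∈ U, DifferentiableAt ℝ (gs i) x := fun i x hx =>
    ((hgs i).differentiableOn one_ne_zero).differentiableAt (hU.mem_nhds hx)
  have hcont : ContinuousAt (fun x j => gradient (gs (idx j)) x) x₀ :=
    continuousAt_pi.mpr fun j => (toDual ℝ F).symm.continuous.continuousAt.comp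
      (((hgs (idx j)).continuousOn_fderiv_of_isOpen hU le_rfl).continuousAt (hU.mem_nhds hx₀))
  set ψ : {j : Fin (d + 1) // j ≠ 0} → F → ℝ := fun j x => gs (idx j) x - gs (idx 0) x
  have hfderivψ : ∀ x ∈ U, (fun j => fderiv ℝ (ψ j) x) =
      fun j : {j : Fin (d + 1) // j ≠ 0} =>
        toDual ℝ F (gradient (gs (idx j)) x - gradient (gs (idx 0)) x) :=
    fun x hx => funext fun j => fderiv_sub_eq_toDual_gradient_sub (hdiff _ x hx) (hdiff _ x hx)
  have hli : LinearIndependent ℝ fun j => fderiv ℝ (ψ j) x₀ := by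
    rw [hfderivψ x₀ hx₀]
    exact ((affineIndependent_iff_linearIndependent_vsub ℝ _ 0).mp hidx).map_of_injective_injective
      id (toDual ℝ F).toLinearEquiv.toAddMonoidHom (fun _ => id)
      (fun _ h => (toDual ℝ F).map_eq_zero_iff.mp h) (fun _ _ => by simp)
  have hspan : ∀ i, ∀ᶠ x in 𝓝 x₀, DifferentiableAt ℝ (fun y => gs i y - gs (idx 0) y) x ∧
      fderiv ℝ (fun y => gs i y - gs (idx 0) y) x ∈
        Submodule.span ℝ (range fun j => fderiv ℝ (ψ j) x) := by
    intro i
    filter_upwards [hU.mem_nhds hx₀,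
      hcont.eventually (isOpen_setOfPred_affineIndependent.mem_nhds hidx)] with x hx hxind
    refine ⟨(hdiff i x hx).sub (hdiff _ x hx), ?_⟩
    rw [hfderivψ x hx, fderiv_sub_eq_toDual_gradient_sub (hdiff i x hx) (hdiff _ x hx)]
    exact toDual_mem_span_of_mem_span <|
      AffineIndependent.vsub_mem_span_vsub_of_card_eq_finrank_add_one
        (p := fun i => gradient (gs i) x) hxind (by simp [hdim x hx]) i 0
  filter_upwards [eventually_all.mpr fun i => eventually_eq_of_forall_eq_of_fderiv_mem_span
    (fun j => ((hgs _).sub (hgs _)).contDiffAt (hU.mem_nhds hx₀)) hli (hspan i)] with x hx heq i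
  simpa [ψ, hc, sub_eq_zero] using hx i fun j => by simp [hc, heq j]

end Gradient

theorem stmt3_general {n k : ℕ} (hk : 0 < k)
    (U : Set (EuclideanSpace ℝ (Fin n))) (hU : IsOpen U)
    (x0 : EuclideanSpace ℝ (Fin n)) (hx0 : x0 ∈ U)
    (g : EuclideanSpace ℝ (Fin n) → ℝ)
    (gs : Fin k → EuclideanSpace ℝ (Fin n) → ℝ)
    (hgs : ∀ i, ContDiffOn ℝ 1 (gs i) U)
    (hsel : ∀ x ∈ U, ∃ i, g x = gs i x)
    -- A1 (i)
    (hA1i : ∀ i, gs i x0 = g x0)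
    -- A1 (ii): essentially active set = active set on U
    (hA1ii : ∀ x ∈ U,
      {i | x ∈ closure (interior {y | y ∈ U ∧ g y = gs i y})} = {i | g x = gs i x})
    -- A1 (iii): constant affine dimension d of the affine hull of the gradients on U
    (d : ℕ)
    (hA1iii : ∀ x ∈ U,
      Module.finrank ℝ (affineSpan ℝ (Set.range fun i => gradient (gs i) x)).direction = d)
    -- affine basis indices
    (idx : Fin (d + 1) → Fin k)
    (hidx : AffineIndependent ℝ (fun j => gradient (gs (idx j)) x0)) :
    ∃ U' : Set (EuclideanSpace ℝ (Fin n)), IsOpen U' ∧ x0 ∈ U' ∧ U' ⊆ U ∧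
      (∀ x ∈ U',
        ((∀ i, gs i x - gs ⟨0, hk⟩ x = 0) ↔ (∀ j, gs (idx j) x - gs (idx 0) x = 0))) ∧
      {x ∈ U' | {i | x ∈ closure (interior {y | y ∈ U ∧ g y = gs i y})} = Set.univ}
        = {x ∈ U' | ∀ j, gs (idx j) x - gs (idx 0) x = 0} := by
  obtain ⟨V, hV, hVopen, hx0V⟩ := eventually_nhds_iff.mp
    (eventually_forall_eq_of_affineIndependent_gradient hU hx0 hgs hA1i hA1iii hidx)
  have hlevel : ∀ x ∈ V, (∀ i, gs i x - gs ⟨0, hk⟩ x = 0) ↔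
      ∀ j, gs (idx j) x - gs (idx 0) x = 0 := by
    intro x hx
    simp only [sub_eq_zero]
    exact ⟨fun h j => (h _).trans (h _).symm,
      fun h i => (hV x hx h i).trans (hV x hx h _).symm⟩
  refine ⟨V ∩ U, hVopen.inter hU, ⟨hx0V, hx0⟩, inter_subset_right,
    fun x hx => hlevel x hx.1, ?_⟩
  ext x
  simp only [mem_ofPred_eq, and_congr_right_iff]
  intro hx
  rw [hA1ii x hx.2, ← hlevel x hx.1, eq_univ_iff_forall]
  obtain ⟨i₀, hi₀⟩ := hsel x hx.2
  simp only [mem_ofPred_eq, sub_eq_zero]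
  exact ⟨fun h i => (h i).symm.trans (h _),
    fun h i => hi₀.trans ((h i₀).trans (h i).symm)⟩

/-- Lemma 3.3 of the paper. For a continuous `g` on an open set `U` with C¹
selection functions `gs 0, …, gs (k-1)`, under Assumption A1 (all selection functions active
at `x⁰`; essentially active set equals active set on `U`; constant affine dimension of the
affine span of the gradients on `U`), and given indices `idx : Fin (d+1) → Fin k` whose
gradients at `x⁰` are affinely independent (hence an affine basis of the affine span of all
gradients at `x⁰`), there is an open neighborhood `U' ⊆ U` of `x⁰` on which
`gs i x - gs 0 x = 0` for all `i` iff `gs (idx j) x - gs (idx 0) x = 0` for all `j`;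
in particular `Ω^{1,…,k} ∩ U'` is the corresponding level set. -/
theorem stmt3 {n k : ℕ} (hk : 0 < k)
    (U : Set (EuclideanSpace ℝ (Fin n))) (hU : IsOpen U)
    (x0 : EuclideanSpace ℝ (Fin n)) (hx0 : x0 ∈ U)
    (g : EuclideanSpace ℝ (Fin n) → ℝ) (hg : ContinuousOn g U)
    (gs : Fin k → EuclideanSpace ℝ (Fin n) → ℝ)
    (hgs : ∀ i, ContDiffOn ℝ 1 (gs i) U)
    (hsel : ∀ x ∈ U, ∃ i, g x = gs i x)
    -- A1 (i)
    (hA1i : ∀ i, gs i x0 = g x0)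
    -- A1 (ii): essentially active set = active set on U
    (hA1ii : ∀ x ∈ U,
      {i | x ∈ closure (interior {y | y ∈ U ∧ g y = gs i y})} = {i | g x = gs i x})
    -- A1 (iii): constant affine dimension d of the affine hull of the gradients on U
    (d : ℕ)
    (hd : d = Module.finrank ℝ
      (affineSpan ℝ (Set.range fun i => gradient (gs i) x0)).direction)
    (hA1iii : ∀ x ∈ U,
      Module.finrank ℝ (affineSpan ℝ (Set.range fun i => gradient (gs i) x)).direction = d)
    -- affine basis indices
    (idx : Fin (d + 1) → Fin k)
    (hidx : AffineIndependent ℝ (fun j => gradient (gs (idx j)) x0)) :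
    ∃ U' : Set (EuclideanSpace ℝ (Fin n)), IsOpen U' ∧ x0 ∈ U' ∧ U' ⊆ U ∧
      (∀ x ∈ U',
        ((∀ i, gs i x - gs ⟨0, hk⟩ x = 0) ↔ (∀ j, gs (idx j) x - gs (idx 0) x = 0))) ∧
      {x ∈ U' | {i | x ∈ closure (interior {y | y ∈ U ∧ g y = gs i y})} = Set.univ}
        = {x ∈ U' | ∀ j, gs (idx j) x - gs (idx 0) x = 0} :=
  stmt3_general hk U hU x0 hx0 g gs hgs hsel hA1i hA1ii d hA1iii idx hidx
end

section
/- Let v, w₁, …, w_k ∈ ℝⁿ. Assume 0 ∈ convexHull({v, w₁, …, w_k}) and 0 ∉ convexHull({w₁, …, w_k}). Let r be the affine dimension of affineSpan({v, w₁, …, w_k}). Then there exist indices i₁, …, i_r ∈ {1,…,k} such that 0 ∈ convexHull({v, w_{i₁}, …, w_{i_r}}) and the set {v, w_{i₁}, …, w_{i_r}} (consisting of r+1 points) is affinely independent. -/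
/-!
By Carathéodory, `0` lies in the convex hull of an affinely independent subset `T` of
`{v, w₁, …, w_k}`, and `v ∈ T` because `0 ∉ conv {w₁, …, w_k}`. Extending `T` inside
`{v, w₁, …, w_k}` to an affinely independent set with the same affine span as the whole set
gives `r + 1` points: `v` and `r` of the `wᵢ`.
-/

open Set Module

section AffineSpace

variable {k V P : Type*} [DivisionRing k] [AddCommGroup V] [Module k V] [AddTorsor V P]

theorem AffineIndependent.exists_subset_affineSpan_eq {s t : Set P}
    (ht : AffineIndependent k ((↑) : t → P)) (hts : t ⊆ s) :
    ∃ u, t ⊆ u ∧ u ⊆ s ∧ affineSpan k u = affineSpan k s ∧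
      AffineIndependent k ((↑) : u → P) := by
  rcases t.eq_empty_or_nonempty with rfl | ⟨p, hp⟩
  · obtain ⟨u, hus, hspan, hu⟩ := exists_affineIndependent k V s
    exact ⟨u, empty_subset u, hus, hspan, hu⟩
  rw [affineIndependent_set_iff_linearIndependent_vsub k hp] at ht
  obtain ⟨b, hbs, htb, hsb, hb⟩ := exists_linearIndepOn_id_extension ht
    (image_mono (sdiff_subset_sdiff_left hts) : (· -ᵥ p) '' (t \ {p}) ⊆ (· -ᵥ p) '' (s \ {p}))
  have hb0 : ∀ x ∈ b, x ≠ (0 : V) := fun x hx => hb.ne_zero hx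
  set u : Set P := {p} ∪ (· +ᵥ p) '' b
  have hpu : p ∈ u := .inl rfl
  have hus : u ⊆ s := by
    rintro q (rfl | ⟨x, hx, rfl⟩)
    · exact hts hp
    · obtain ⟨q, hq, rfl⟩ := hbs hx
      simpa using hq.1
  have hbu : Submodule.span k b ≤ (affineSpan k u).direction := by
    rw [Submodule.span_le, direction_affineSpan]
    intro x hx
    have hxu : x +ᵥ p ∈ u := .inr ⟨x, hx, rfl⟩
    simpa using vsub_mem_vectorSpan k hxu hpu
  refine ⟨u, fun q hq => ?_, hus, le_antisymm (affineSpan_mono k hus) ?_,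
    (linearIndependent_set_iff_affineIndependent_vadd_union_singleton k hb0 p).mp hb⟩
  · by_cases hqp : q = p
    · exact .inl hqp
    · exact .inr ⟨q -ᵥ p, htb ⟨q, ⟨hq, hqp⟩, rfl⟩, vsub_vadd q p⟩
  refine affineSpan_le.mpr fun q hq => ?_
  by_cases hqp : q = p
  · exact hqp ▸ mem_affineSpan k hpu
  · rw [SetLike.mem_coe, ← AffineSubspace.vsub_right_mem_direction_iff_mem (mem_affineSpan k hpu)]
    exact hbu (hsb ⟨q, ⟨hq, hqp⟩, rfl⟩)

theorem AffineIndependent.finrank_direction_affineSpan_add_one {s : Set P}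
    (hs : AffineIndependent k ((↑) : s → P)) (hfin : s.Finite) (hne : s.Nonempty) :
    finrank k (affineSpan k s).direction + 1 = s.ncard := by
  have := hfin.fintype
  have := hne.to_subtype
  rw [direction_affineSpan, ← Subtype.range_coe (s := s), hs.finrank_vectorSpan_add_one,
    Subtype.range_coe, ← Nat.card_coe_set_eq, Nat.card_eq_fintype_card]

end AffineSpace

theorem Set.Finite.exists_injective_comp_fin_eq {α ι : Type*} {s : Set α} {w : ι → α} {r : ℕ}
    (hs : s.Finite) (hcard : s.ncard = r) (hsw : s ⊆ range w) :
    ∃ idx : Fin r → ι, Function.Injective (w ∘ idx) ∧ range (w ∘ idx) = s := by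
  have := hs.to_subtype
  let e : Fin r ≃ s :=
    ((Finite.equivFin s).trans (finCongr (by rw [Nat.card_coe_set_eq, hcard]))).symm
  choose idx hidx using fun j => hsw (e j).2
  have hwe : w ∘ idx = (↑) ∘ e := funext hidx
  refine ⟨idx, hwe ▸ Subtype.val_injective.comp e.injective, ?_⟩
  rw [hwe, range_comp, e.range_eq_univ, image_univ, Subtype.range_coe]

/-- Lemma 3.5 (Carathéodory-type reduction). If `0 ∈ conv({v, w₁,…,w_k})`
but `0 ∉ conv({w₁,…,w_k})`, and `r` is the affine dimension of `aff({v, w₁,…,w_k})`, then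
there are indices `i₁,…,i_r` with `0 ∈ conv({v, w_{i₁},…,w_{i_r}})` and
`{v, w_{i₁},…,w_{i_r}}` affinely independent. -/
theorem stmt4 {n k : ℕ} (v : EuclideanSpace ℝ (Fin n))
    (w : Fin k → EuclideanSpace ℝ (Fin n))
    (h0 : (0 : EuclideanSpace ℝ (Fin n)) ∈ convexHull ℝ (insert v (Set.range w)))
    (h0g : (0 : EuclideanSpace ℝ (Fin n)) ∉ convexHull ℝ (Set.range w))
    (r : ℕ)
    (hr : r = Module.finrank ℝ (affineSpan ℝ (insert v (Set.range w))).direction) :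
    ∃ idx : Fin r → Fin k,
      (0 : EuclideanSpace ℝ (Fin n)) ∈
        convexHull ℝ (insert v (Set.range fun j => w (idx j))) ∧
      AffineIndependent ℝ
        (Fin.cons v (fun j => w (idx j)) : Fin (r + 1) → EuclideanSpace ℝ (Fin n)) := by
  rw [convexHull_eq_union] at h0
  simp only [mem_iUnion] at h0
  obtain ⟨T, hTS, hT, h0T⟩ := h0
  have hvT : v ∈ (T : Set _) := by
    by_contra hv
    have hTw : (T : Set _) ⊆ range w := fun x hx =>
      (hTS hx).resolve_left (ne_of_mem_of_not_mem hx hv)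
    exact h0g (convexHull_mono hTw h0T)
  obtain ⟨u, hTu, huS, hspan, hu⟩ := hT.exists_subset_affineSpan_eq hTS
  have hvu : v ∈ u := hTu hvT
  have hufin : u.Finite := ((finite_range w).insert v).subset huS
  have hcard : (u \ {v}).ncard = r := by
    rw [ncard_sdiff_singleton_of_mem hvu, ← hu.finrank_direction_affineSpan_add_one hufin ⟨v, hvu⟩,
      hspan, hr, Nat.add_sub_cancel]
  have hwu : u \ {v} ⊆ range w := fun x hx => (huS hx.1).resolve_left hx.2
  obtain ⟨idx, hinj, hrange⟩ := hufin.sdiff.exists_injective_comp_fin_eq hcard hwu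
  have hcons : insert v (range (w ∘ idx)) = u := by
    rw [hrange, insert_sdiff_singleton, insert_eq_of_mem hvu]
  have hvw : v ∉ range (w ∘ idx) := by
    rw [hrange]
    exact fun h => h.2 rfl
  refine ⟨idx, convexHull_mono (hTu.trans hcons.ge) h0T, ?_⟩
  rw [← hcons, ← Fin.range_cons] at hu
  exact hu.of_set_of_injective (Fin.cons_injective_iff.mpr ⟨hvw, hinj⟩)
end

section
/- Let v, w₁, …, w_l ∈ ℝⁿ. Suppose there exist, for s ∈ {1,2}, real numbers α^s > 0 and vectors β^s ∈ ℝ^l with β^s_j ≥ 0 for all j, α^s + Σ_{j=1}^l β^s_j = 1, α^s·v + Σ_{j=1}^l β^s_j·w_j = 0, and α¹ ≠ α². Then v ∈ affineSpan({w₁, …, w_l}). -/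
section

variable {k V ι : Type*} [DivisionRing k] [AddCommGroup V] [Module k V]

theorem Finset.sum_smul_mem_affineSpan {s : Finset ι} {c : ι → k} (hc : ∑ i ∈ s, c i = 1)
    (w : ι → V) : ∑ i ∈ s, c i • w i ∈ affineSpan k (Set.range w) := by
  rw [← s.affineCombination_eq_linear_combination w c hc]
  exact affineCombination_mem_affineSpan hc w

theorem mem_affineSpan_of_smul_eq_sum {s : Finset ι} {a : k} (ha : a ≠ 0) {v : V}
    {b : ι → k} {w : ι → V} (hsum : ∑ i ∈ s, b i = a) (hv : a • v = ∑ i ∈ s, b i • w i) :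
    v ∈ affineSpan k (Set.range w) := by
  have hv' : v = ∑ i ∈ s, (a⁻¹ * b i) • w i := by
    simp_rw [mul_smul, ← Finset.smul_sum, ← hv, inv_smul_smul₀ ha]
  rw [hv']
  refine Finset.sum_smul_mem_affineSpan ?_ w
  rw [← Finset.mul_sum, hsum, inv_mul_cancel₀ ha]

/-- Subtracting the two relations eliminates the constant `1` and leaves `v` as a multiple of a
combination of the `w i` whose weights sum to that multiple. -/
theorem mem_affineSpan_of_vanishing_combinations {s : Finset ι} {v : V} {w : ι → V}
    {a₁ a₂ : k} {b₁ b₂ : ι → k}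
    (hsum₁ : a₁ + ∑ i ∈ s, b₁ i = 1) (hsum₂ : a₂ + ∑ i ∈ s, b₂ i = 1)
    (hcomb₁ : a₁ • v + ∑ i ∈ s, b₁ i • w i = 0) (hcomb₂ : a₂ • v + ∑ i ∈ s, b₂ i • w i = 0)
    (hne : a₁ ≠ a₂) : v ∈ affineSpan k (Set.range w) := by
  refine mem_affineSpan_of_smul_eq_sum (s := s) (b := b₂ - b₁) (sub_ne_zero.mpr hne) ?_ ?_
  · simp only [Pi.sub_apply, Finset.sum_sub_distrib]
    rw [eq_sub_of_add_eq hsum₁, eq_sub_of_add_eq hsum₂]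
    abel
  · simp only [Pi.sub_apply, sub_smul, Finset.sum_sub_distrib]
    rw [eq_neg_of_add_eq_zero_right hcomb₁, eq_neg_of_add_eq_zero_right hcomb₂]
    abel

end

theorem stmt5_general {n l : ℕ} (v : EuclideanSpace ℝ (Fin n))
    (w : Fin l → EuclideanSpace ℝ (Fin n))
    (α₁ α₂ : ℝ) (β₁ β₂ : Fin l → ℝ)
    (hsum₁ : α₁ + ∑ j, β₁ j = 1) (hsum₂ : α₂ + ∑ j, β₂ j = 1)
    (hcomb₁ : α₁ • v + ∑ j, β₁ j • w j = 0)
    (hcomb₂ : α₂ • v + ∑ j, β₂ j • w j = 0)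
    (hne : α₁ ≠ α₂) :
    v ∈ affineSpan ℝ (Set.range w) :=
  mem_affineSpan_of_vanishing_combinations hsum₁ hsum₂ hcomb₁ hcomb₂ hne

/-- Lemma 3.6(a). If there are two distinct KKT multipliers `α¹ ≠ α²` for `v`
in vanishing convex combinations with `w₁,…,w_l`, then `v ∈ aff({w₁,…,w_l})`. -/
theorem stmt5 {n l : ℕ} (v : EuclideanSpace ℝ (Fin n))
    (w : Fin l → EuclideanSpace ℝ (Fin n))
    (α₁ α₂ : ℝ) (β₁ β₂ : Fin l → ℝ)
    (hα₁ : 0 < α₁) (hα₂ : 0 < α₂)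
    (hβ₁ : ∀ j, 0 ≤ β₁ j) (hβ₂ : ∀ j, 0 ≤ β₂ j)
    (hsum₁ : α₁ + ∑ j, β₁ j = 1) (hsum₂ : α₂ + ∑ j, β₂ j = 1)
    (hcomb₁ : α₁ • v + ∑ j, β₁ j • w j = 0)
    (hcomb₂ : α₂ • v + ∑ j, β₂ j • w j = 0)
    (hne : α₁ ≠ α₂) :
    v ∈ affineSpan ℝ (Set.range w) :=
  stmt5_general v w α₁ α₂ β₁ β₂ hsum₁ hsum₂ hcomb₁ hcomb₂ hne
end

section
/- Let v, w₁, …, w_l ∈ ℝⁿ. Suppose v ∈ affineSpan({w₁, …, w_l}) and 0 lies in the intrinsic (relative) interior of convexHull({v, w₁, …, w_l}). Then there exist, for s ∈ {1,2}, real numbers α^s > 0 and vectors β^s ∈ ℝ^l with β^s_j > 0 for all j, α^s + Σ_{j=1}^l β^s_j = 1, α^s·v + Σ_{j=1}^l β^s_j·w_j = 0, and α¹ ≠ α². -/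
/-!
Moving from `x` slightly beyond itself, away from the barycentre `b` of the points, stays inside
the convex hull because `x` is a relative interior point; writing that point as a convex
combination and averaging it with `b` exhibits `x` as a convex combination with all weights
positive. The affine relation `v = ∑ cⱼ wⱼ`, `∑ cⱼ = 1`, is a direction `(1, -c)` along which
these weights can be moved a little without losing positivity or either equation, and moving
along it changes the weight of `v`.
-/

open Set Filter Topology Finset

section

variable {ι E : Type*} [AddCommGroup E] [Module ℝ E]

theorem convexHull_range_eq_image_stdSimplex [Fintype ι] (p : ι → E) :
    convexHull ℝ (range p) = Fintype.linearCombination ℝ p '' stdSimplex ℝ ι := by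
  classical
  rw [← convexHull_rangle_single_eq_stdSimplex, LinearMap.image_convexHull, ← range_comp]
  congr 2
  ext i
  simp [Fintype.linearCombination_apply_single]

theorem mem_convexHull_range_iff_exists_weights [Fintype ι] {p : ι → E} {x : E} :
    x ∈ convexHull ℝ (range p) ↔
      ∃ μ : ι → ℝ, (∀ i, 0 ≤ μ i) ∧ ∑ i, μ i = 1 ∧ ∑ i, μ i • p i = x := by
  simp [convexHull_range_eq_image_stdSimplex, stdSimplex, Fintype.linearCombination_apply,
    and_assoc]

theorem exists_pos_forall_pos_add_mul [Finite ι] {μ : ι → ℝ} (hμ : ∀ i, 0 < μ i)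
    (d : ι → ℝ) : ∃ ε > 0, ∀ i, 0 < μ i + ε * d i := by
  have : ∀ᶠ ε in 𝓝 (0 : ℝ), ∀ i, 0 < μ i + ε * d i := eventually_all.2 fun i =>
    continuousAt_const.eventually_lt (by fun_prop) (by simpa using hμ i)
  obtain ⟨ε, hpos, hε : 0 < ε⟩ :=
    ((this.filter_mono (nhdsWithin_le_nhds (s := Ioi 0))).and self_mem_nhdsWithin).exists
  exact ⟨ε, hε, hpos⟩

theorem exists_pos_weights_add_mul [Fintype ι] {p : ι → E} {x : E} {μ d : ι → ℝ}
    (hμ : ∀ i, 0 < μ i) (hμ1 : ∑ i, μ i = 1) (hμx : ∑ i, μ i • p i = x)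
    (hd : ∑ i, d i = 0) (hdp : ∑ i, d i • p i = 0) :
    ∃ ε > 0, (∀ i, 0 < μ i + ε * d i) ∧ ∑ i, (μ i + ε * d i) = 1 ∧
      ∑ i, (μ i + ε * d i) • p i = x := by
  obtain ⟨ε, hε, hpos⟩ := exists_pos_forall_pos_add_mul hμ d
  refine ⟨ε, hε, hpos, ?_, ?_⟩
  · rw [sum_add_distrib, ← mul_sum, hμ1, hd, mul_zero, add_zero]
  · simp only [add_smul, mul_smul, sum_add_distrib, ← smul_sum, hμx, hdp, smul_zero, add_zero]

variable [TopologicalSpace E] [IsTopologicalAddGroup E] [ContinuousSMul ℝ E]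

theorem eventually_lineMap_mem_of_mem_intrinsicInterior {s : Set E} {x y : E}
    (hx : x ∈ intrinsicInterior ℝ s) (hy : y ∈ affineSpan ℝ s) :
    ∀ᶠ t in 𝓝 (0 : ℝ), AffineMap.lineMap x y t ∈ s := by
  obtain ⟨z, hz, rfl⟩ := mem_intrinsicInterior.1 hx
  let f : ℝ → affineSpan ℝ s := fun t =>
    ⟨AffineMap.lineMap (z : E) y t, AffineMap.lineMap_mem t z.2 hy⟩
  have hf : Continuous f := AffineMap.lineMap_continuous.subtype_mk _
  have hf0 : f 0 = z := Subtype.ext (AffineMap.lineMap_apply_zero _ _)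
  have : ∀ᶠ t in 𝓝 0, f t ∈ interior ((↑) ⁻¹' s) :=
    hf.continuousAt.eventually_mem (hf0 ▸ isOpen_interior.mem_nhds hz)
  exact this.mono fun t ht =>
    show f t ∈ ((↑) ⁻¹' s : Set (affineSpan ℝ s)) from interior_subset ht

theorem exists_pos_weights_of_mem_intrinsicInterior_convexHull [Fintype ι] {p : ι → E} {x : E}
    (hx : x ∈ intrinsicInterior ℝ (convexHull ℝ (range p))) :
    ∃ μ : ι → ℝ, (∀ i, 0 < μ i) ∧ ∑ i, μ i = 1 ∧ ∑ i, μ i • p i = x := by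
  have : Nonempty ι := range_nonempty_iff_nonempty.1 <|
    convexHull_nonempty_iff.1 ⟨x, intrinsicInterior_subset hx⟩
  set N : ℝ := (Fintype.card ι : ℝ)
  have hN : 0 < N := by positivity
  set b := ∑ i, N⁻¹ • p i
  have hb : b ∈ affineSpan ℝ (convexHull ℝ (range p)) :=
    subset_affineSpan _ _ <| mem_convexHull_range_iff_exists_weights.2
      ⟨fun _ => N⁻¹, fun _ => by positivity, by simp [N], rfl⟩
  obtain ⟨t, ht, ht0 : t < 0⟩ :=
    ((eventually_lineMap_mem_of_mem_intrinsicInterior hx hb).filter_mono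
      (nhdsWithin_le_nhds (s := Iio 0)) |>.and self_mem_nhdsWithin).exists
  obtain ⟨ν, hν0, hν1, hνx⟩ := mem_convexHull_range_iff_exists_weights.1 ht
  rw [AffineMap.lineMap_apply_module] at hνx
  have h1t : 0 < 1 - t := by linarith
  refine ⟨fun i => (1 - t)⁻¹ * (ν i - t * N⁻¹), fun i => ?_, ?_, ?_⟩
  · have : 0 < -t * N⁻¹ := mul_pos (neg_pos.2 ht0) (inv_pos.2 hN)
    exact mul_pos (inv_pos.2 h1t) (by linarith [hν0 i])
  · rw [← mul_sum, sum_sub_distrib, hν1, sum_const, card_univ, nsmul_eq_mul]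
    field_simp
    ring
  · have : ∑ i, ((1 - t)⁻¹ * (ν i - t * N⁻¹)) • p i
        = (1 - t)⁻¹ • (∑ i, ν i • p i - t • b) := by
      simp only [mul_smul, sub_smul, sum_sub_distrib, smul_sub, smul_sum, b]
    rw [this, hνx, add_sub_cancel_right, smul_smul, inv_mul_cancel₀ h1t.ne', one_smul]

end

/-- Lemma 3.6(b). If `v ∈ aff({w₁,…,w_l})` and `0` lies in the relative
(intrinsic) interior of `conv({v, w₁,…,w_l})`, then the KKT multiplier of `v` is not
unique: there are two vanishing strictly positive convex combinations with `α¹ ≠ α²`. -/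
theorem stmt6 {n l : ℕ} (v : EuclideanSpace ℝ (Fin n))
    (w : Fin l → EuclideanSpace ℝ (Fin n))
    (hv : v ∈ affineSpan ℝ (Set.range w))
    (h0 : (0 : EuclideanSpace ℝ (Fin n)) ∈
      intrinsicInterior ℝ (convexHull ℝ (insert v (Set.range w)))) :
    ∃ (α₁ α₂ : ℝ) (β₁ β₂ : Fin l → ℝ),
      0 < α₁ ∧ 0 < α₂ ∧ (∀ j, 0 < β₁ j) ∧ (∀ j, 0 < β₂ j) ∧
      α₁ + ∑ j, β₁ j = 1 ∧ α₂ + ∑ j, β₂ j = 1 ∧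
      α₁ • v + ∑ j, β₁ j • w j = 0 ∧ α₂ • v + ∑ j, β₂ j • w j = 0 ∧ α₁ ≠ α₂ := by
  rw [← Fin.range_cons] at h0
  obtain ⟨μ, hμ, hμ1, hμ0⟩ := exists_pos_weights_of_mem_intrinsicInterior_convexHull h0
  obtain ⟨c, hc1, hvc⟩ := eq_affineCombination_of_mem_affineSpan_of_fintype hv
  rw [affineCombination_eq_linear_combination _ _ _ hc1] at hvc
  obtain ⟨ε, hε, hpos, hsum, hcomb⟩ :=
    exists_pos_weights_add_mul (d := Fin.cons 1 (-c)) hμ hμ1 hμ0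
      (by simp [Fin.sum_univ_succ, hc1]) (by simp [Fin.sum_univ_succ, hvc])
  simp only [Fin.sum_univ_succ, Fin.cons_zero, Fin.cons_succ] at hμ1 hμ0 hsum hcomb
  exact ⟨μ 0, _, _, _, hμ 0, hpos 0, fun j => hμ j.succ, fun j => hpos j.succ, hμ1, hsum, hμ0,
    hcomb, by simp [hε.ne']⟩
end

section
/- Let v, w₁, …, w_k ∈ ℝⁿ. Suppose there exist indices i₁, …, i_r ∈ {1,…,k} such that {v, w_{i₁}, …, w_{i_r}} is affinely independent, affineSpan({v, w_{i₁}, …, w_{i_r}}) = affineSpan({v, w₁, …, w_k}), and there exist α⁰ > 0 and β⁰ ∈ ℝ^r with β⁰_j > 0 for all j, α⁰ + Σ_{j=1}^r β⁰_j = 1 and α⁰·v + Σ_{j=1}^r β⁰_j·w_{i_j} = 0. Then 0 lies in the intrinsic (relative) interior of convexHull({v, w₁, …, w_k}). -/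
/-!
The subfamily `p = (v, w_{i₁}, …, w_{i_r})` is affinely independent and has a vanishing convex
combination with positive weights, so `0` lies in its affine span, which is then the linear span
`E` of `p`. Inside `E` the family `p` is an affine basis, the weights are the barycentric
coordinates of `0`, and a point with positive barycentric coordinates is interior to the simplex
`conv p`. Since `conv p ⊆ conv {v, w₁, …, w_k}` and both have the same affine span, relative
interiors are monotone here, which gives the claim.
-/

open Set

theorem intrinsicInterior_mono_of_affineSpan_eq {𝕜 V P : Type*} [Ring 𝕜] [AddCommGroup V]
    [Module 𝕜 V] [TopologicalSpace P] [AddTorsor V P] {s t : Set P} (hst : s ⊆ t)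
    (hspan : affineSpan 𝕜 s = affineSpan 𝕜 t) :
    intrinsicInterior 𝕜 s ⊆ intrinsicInterior 𝕜 t := by
  unfold intrinsicInterior
  rw [hspan]
  exact image_mono (interior_mono (preimage_mono hst))

theorem AffineIndependent.zero_mem_intrinsicInterior_convexHull {V ι : Type*}
    [NormedAddCommGroup V] [NormedSpace ℝ V] [Fintype ι] {p : ι → V}
    (hp : AffineIndependent ℝ p) {w : ι → ℝ} (hw : ∀ i, 0 < w i) (hw₁ : ∑ i, w i = 1)
    (hw₀ : ∑ i, w i • p i = 0) :
    (0 : V) ∈ intrinsicInterior ℝ (convexHull ℝ (range p)) := by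
  set E := Submodule.span ℝ (range p)
  let q : ι → E := fun i => ⟨p i, Submodule.subset_span (mem_range_self i)⟩
  have hq₀ : Finset.univ.affineCombination ℝ q w = 0 := by
    rw [Finset.affineCombination_eq_linear_combination _ _ _ hw₁]
    exact Subtype.ext (by simpa [q] using hw₀)
  have hrange : range q = ((↑) : E → V) ⁻¹' range p := by
    ext x
    exact ⟨by rintro ⟨i, rfl⟩; exact ⟨i, rfl⟩, fun ⟨i, hi⟩ => ⟨i, Subtype.ext hi⟩⟩
  have hspan : affineSpan ℝ (range q) = ⊤ := by
    have h0 : (0 : E) ∈ affineSpan ℝ (range q) := hq₀ ▸ affineCombination_mem_affineSpan hw₁ q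
    apply SetLike.coe_injective
    rw [← affineSpan_insert_eq_affineSpan ℝ h0, affineSpan_insert_zero, hrange,
      Submodule.span_span_coe_preimage]
    rfl
  let b : AffineBasis ι ℝ E := ⟨q, hp.of_comp E.subtype.toAffineMap, hspan⟩
  have hint : (0 : E) ∈ interior (convexHull ℝ (range b)) := by
    rw [b.interior_convexHull]
    intro i
    have hcoord := b.coord_apply_combination_of_mem (Finset.mem_univ i) hw₁
    rw [show Finset.univ.affineCombination ℝ b w = 0 from hq₀] at hcoord
    exact hcoord ▸ hw i
  have himage :
      E.subtypeₗᵢ.toAffineIsometry '' convexHull ℝ (range q) = convexHull ℝ (range p) := by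
    rw [← AffineIsometry.coe_toAffineMap, AffineMap.image_convexHull, ← range_comp]
    rfl
  rw [← himage, AffineIsometry.intrinsicInterior_image]
  exact ⟨0, interior_subset_intrinsicInterior hint, rfl⟩

/-- Lemma 3.9. If there is an affinely independent subfamily
`{v, w_{i₁},…,w_{i_r}}` spanning the same affine hull as `{v, w₁,…,w_k}` and admitting a
vanishing convex combination with strictly positive coefficients, then
`0 ∈ ri(conv({v, w₁,…,w_k}))`. -/
theorem stmt7 {n k r : ℕ} (v : EuclideanSpace ℝ (Fin n))
    (w : Fin k → EuclideanSpace ℝ (Fin n))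
    (idx : Fin r → Fin k)
    (hind : AffineIndependent ℝ
      (Fin.cons v (fun j => w (idx j)) : Fin (r + 1) → EuclideanSpace ℝ (Fin n)))
    (hspan : affineSpan ℝ (insert v (Set.range fun j => w (idx j)))
      = affineSpan ℝ (insert v (Set.range w)))
    (α₀ : ℝ) (β₀ : Fin r → ℝ) (hα₀ : 0 < α₀) (hβ₀ : ∀ j, 0 < β₀ j)
    (hsum : α₀ + ∑ j, β₀ j = 1)
    (hcomb : α₀ • v + ∑ j, β₀ j • w (idx j) = 0) :
    (0 : EuclideanSpace ℝ (Fin n)) ∈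
      intrinsicInterior ℝ (convexHull ℝ (insert v (Set.range w))) := by
  set p : Fin (r + 1) → EuclideanSpace ℝ (Fin n) := Fin.cons v (fun j => w (idx j))
  have hrange : range p = insert v (range fun j => w (idx j)) := Fin.range_cons _ _
  have hzero : (0 : EuclideanSpace ℝ (Fin n)) ∈ intrinsicInterior ℝ (convexHull ℝ (range p)) :=
    hind.zero_mem_intrinsicInterior_convexHull (w := Fin.cons α₀ β₀)
      (Fin.cases hα₀ hβ₀) (by simpa [Fin.sum_cons] using hsum)
      (by simpa [Fin.sum_univ_succ, p] using hcomb)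
  refine intrinsicInterior_mono_of_affineSpan_eq (convexHull_mono ?_) ?_ hzero
  · rw [hrange]
    exact insert_subset_insert (range_comp_subset_range idx w)
  · rw [affineSpan_convexHull, affineSpan_convexHull, hrange, hspan]
end

section
/- Let f : ℝⁿ → ℝ be C¹, let g : ℝⁿ → ℝ be continuous with C¹ selection functions g₁, …, g_k : ℝⁿ → ℝ (so g(x) ∈ {g₁(x),…,g_k(x)} for all x), and define the Pareto critical set P_c := {x ∈ ℝⁿ : 0 ∈ convexHull({∇f(x)} ∪ {∇g_i(x) : i ∈ I^e(x)})}. Let x⁰ ∈ P_c with I^e(x⁰) = {i₁, …, i_l}. Suppose that every open neighborhood U of x⁰ contains a point x ∈ P_c ∩ U with I^e(x) ≠ I^e(x⁰). Then there exist α ≥ 0 and β ∈ ℝ^l with β_j ≥ 0 for all j, α + Σ_{j=1}^l β_j = 1, α∇f(x⁰) + Σ_{j=1}^l β_j ∇g_{i_j}(x⁰) = 0, and β_j = 0 for at least one j ∈ {1,…,l}. -/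
/-!
Near `x⁰` the essentially active set can only shrink, since it is cut out by finitely many
closed sets. Hence the Pareto critical points accumulating at `x⁰` with a different essentially
active set may be taken to all miss one fixed index `i_{j₀}`, and each of them carries
convex weights with `β_{j₀} = 0`. Weights with `β_{j₀} = 0` range over a compact face of the
simplex and the gradients are continuous, so the set of points admitting such a vanishing
combination is closed, and therefore contains `x⁰`.
-/

open Set Filter Topology

lemma ContDiff.continuous_gradient {E : Type*} [NormedAddCommGroup E] [InnerProductSpace ℝ E]
    [CompleteSpace E] {f : E → ℝ} (hf : ContDiff ℝ 1 f) : Continuous (gradient f) :=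
  (InnerProductSpace.toDual ℝ E).symm.continuous.comp (hf.continuous_fderiv one_ne_zero)

lemma IsCompact.isClosed_setOf_exists_mem {X Y : Type*} [TopologicalSpace X]
    [TopologicalSpace Y] {K : Set Y} (hK : IsCompact K) {A : Set (X × Y)} (hA : IsClosed A) :
    IsClosed {x | ∃ y ∈ K, (x, y) ∈ A} := by
  have : CompactSpace K := isCompact_iff_compactSpace.mp hK
  convert isClosedMap_fst_of_compactSpace (X := X) (Y := K) _
    (hA.preimage (continuous_id.prodMap continuous_subtype_val)) using 1
  ext x
  exact ⟨fun ⟨y, hy, h⟩ => ⟨(x, ⟨y, hy⟩), h, rfl⟩,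
    fun ⟨⟨_, y⟩, h, hx⟩ => ⟨y, y.2, hx ▸ h⟩⟩

lemma eventually_setOf_mem_subset {X ι : Type*} [TopologicalSpace X] [Finite ι]
    {C : ι → Set X} (hC : ∀ i, IsClosed (C i)) (x₀ : X) :
    ∀ᶠ x in 𝓝 x₀, {i | x ∈ C i} ⊆ {i | x₀ ∈ C i} := by
  have : ∀ i, ∀ᶠ x in 𝓝 x₀, x ∈ C i → x₀ ∈ C i := fun i => by
    by_cases hi : x₀ ∈ C i
    · exact Eventually.of_forall fun _ _ => hi
    · exact ((hC i).isOpen_compl.eventually_mem hi).mono fun _ hx h => absurd h hx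
  exact (eventually_all.2 this).mono fun _ hx i => hx i

lemma exists_frequently_notMem_of_frequently_setOf_mem_ne {X ι : Type*} [TopologicalSpace X]
    [Finite ι] {C : ι → Set X} (hC : ∀ i, IsClosed (C i)) {x₀ : X} {p : X → Prop}
    (h : ∃ᶠ x in 𝓝 x₀, p x ∧ {i | x ∈ C i} ≠ {i | x₀ ∈ C i}) :
    ∃ i, x₀ ∈ C i ∧ ∃ᶠ x in 𝓝 x₀, p x ∧ {i | x ∈ C i} ⊆ {i | x₀ ∈ C i} ∧ x ∉ C i := by
  have : ∃ᶠ x in 𝓝 x₀, ∃ i, x₀ ∈ C i ∧ p x ∧ {i | x ∈ C i} ⊆ {i | x₀ ∈ C i} ∧ x ∉ C i := by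
    refine (h.and_eventually (eventually_setOf_mem_subset hC x₀)).mono ?_
    rintro x ⟨⟨hp, hne⟩, hsub⟩
    obtain ⟨i, hi₀, hi⟩ : ∃ i, x₀ ∈ C i ∧ x ∉ C i := by
      by_contra! h
      exact hne (hsub.antisymm h)
    exact ⟨i, hi₀, hp, hsub, hi⟩
  obtain ⟨i, hi⟩ := frequently_exists.1 this
  exact ⟨i, frequently_and_distrib_left.1 hi⟩

lemma exists_stdSimplex_of_mem_convexHull_image {E ι : Type*} [AddCommGroup E] [Module ℝ E]
    [Fintype ι] {v : ι → E} {s : Set ι} {x : E} (h : x ∈ convexHull ℝ (v '' s)) :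
    ∃ w ∈ stdSimplex ℝ ι, (∀ i ∉ s, w i = 0) ∧ ∑ i, w i • v i = x := by
  classical
  have hv : v '' s = Fintype.linearCombination ℝ v '' ((fun i => Pi.single i 1) '' s) := by
    rw [← image_comp]
    exact image_congr fun i _ => by simp
  rw [hv, ← LinearMap.image_convexHull] at h
  obtain ⟨w, hw, rfl⟩ := h
  have hface : convexHull ℝ ((fun i => Pi.single i 1) '' s) ⊆
      stdSimplex ℝ ι ∩ sᶜ.pi fun _ => {0} := by
    refine convexHull_min ?_
      ((convex_stdSimplex ℝ ι).inter (convex_pi fun _ _ => convex_singleton 0))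
    rintro _ ⟨i, hi, rfl⟩
    refine ⟨single_mem_stdSimplex ℝ i, fun j hj => ?_⟩
    simp [show j ≠ i from fun h => hj (h ▸ hi)]
  exact ⟨w, (hface hw).1, (hface hw).2, rfl⟩

lemma exists_stdSimplex_of_zero_mem_convexHull_insert_image {E ι κ : Type*} [AddCommGroup E]
    [Module ℝ E] [Fintype ι] {a : E} {v : κ → E} {idx : ι → κ} {I : Set κ}
    (hI : I ⊆ range idx) (h : 0 ∈ convexHull ℝ (insert a (v '' I))) :
    ∃ w ∈ stdSimplex ℝ (Option ι), (∀ j, idx j ∉ I → w (some j) = 0) ∧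
      w none • a + ∑ j, w (some j) • v (idx j) = 0 := by
  have hI' : insert a (v '' I) =
      Option.elim' a (v ∘ idx) '' insert none (some '' (idx ⁻¹' I)) := by
    rw [image_insert_eq, ← image_comp]
    change insert a (v '' I) = insert a ((v ∘ idx) '' (idx ⁻¹' I))
    rw [image_comp, image_preimage_eq_of_subset hI]
  obtain ⟨w, hw, hw₀, hsum⟩ := exists_stdSimplex_of_mem_convexHull_image (hI' ▸ h)
  refine ⟨w, hw, fun j hj => hw₀ _ (by simpa using hj), ?_⟩
  simpa [Fintype.sum_option] using hsum

theorem stmt10_general {n k l : ℕ}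
    (f : EuclideanSpace ℝ (Fin n) → ℝ) (hf : ContDiff ℝ 1 f)
    (g : EuclideanSpace ℝ (Fin n) → ℝ)
    (gs : Fin k → EuclideanSpace ℝ (Fin n) → ℝ) (hgs : ∀ i, ContDiff ℝ 1 (gs i))
    (Pc : Set (EuclideanSpace ℝ (Fin n)))
    (hPc : Pc = {x | (0 : EuclideanSpace ℝ (Fin n)) ∈ convexHull ℝ
      (insert (gradient f x)
        ((fun i => gradient (gs i) x) '' {i | x ∈ closure (interior {y | g y = gs i y})}))})
    (x0 : EuclideanSpace ℝ (Fin n))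
    (idx : Fin l → Fin k)
    (hIe : {i | x0 ∈ closure (interior {y | g y = gs i y})} = Set.range idx)
    (hacc : ∀ U : Set (EuclideanSpace ℝ (Fin n)), IsOpen U → x0 ∈ U →
      ∃ x ∈ Pc ∩ U, {i | x ∈ closure (interior {y | g y = gs i y})}
        ≠ {i | x0 ∈ closure (interior {y | g y = gs i y})}) :
    ∃ (α : ℝ) (β : Fin l → ℝ), 0 ≤ α ∧ (∀ j, 0 ≤ β j) ∧ α + ∑ j, β j = 1 ∧
      α • gradient f x0 + ∑ j, β j • gradient (gs (idx j)) x0 = 0 ∧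
      ∃ j, β j = 0 := by
  have hfreq : ∃ᶠ x in 𝓝 x0, x ∈ Pc ∧ {i | x ∈ closure (interior {y | g y = gs i y})}
      ≠ {i | x0 ∈ closure (interior {y | g y = gs i y})} :=
    (nhds_basis_opens x0).frequently_iff.2 fun U ⟨hx0U, hU⟩ => by
      obtain ⟨x, ⟨hxPc, hxU⟩, hne⟩ := hacc U hU hx0U
      exact ⟨x, hxU, hxPc, hne⟩
  obtain ⟨i₀, hi₀, hfreq⟩ :=
    exists_frequently_notMem_of_frequently_setOf_mem_ne (fun _ => isClosed_closure) hfreq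
  rw [hIe] at hfreq
  obtain ⟨j₀, rfl⟩ : i₀ ∈ range idx := hIe ▸ hi₀
  set K := stdSimplex ℝ (Option (Fin l)) ∩ {w | w (some j₀) = 0}
  have hK : IsCompact K :=
    (isCompact_stdSimplex ℝ _).inter_right (isClosed_eq (continuous_apply _) continuous_const)
  have hF : Continuous fun p : EuclideanSpace ℝ (Fin n) × (Option (Fin l) → ℝ) =>
      p.2 none • gradient f p.1 + ∑ j, p.2 (some j) • gradient (gs (idx j)) p.1 := by
    have := hf.continuous_gradient
    have := fun i => (hgs i).continuous_gradient
    fun_prop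
  have hweights : ∃ᶠ x in 𝓝 x0,
      ∃ w ∈ K, w none • gradient f x + ∑ j, w (some j) • gradient (gs (idx j)) x = 0 := by
    refine hfreq.mono fun x ⟨hxPc, hsub, hx⟩ => ?_
    rw [hPc] at hxPc
    obtain ⟨w, hw, hw0, hwF⟩ := exists_stdSimplex_of_zero_mem_convexHull_insert_image hsub hxPc
    exact ⟨w, ⟨hw, hw0 j₀ hx⟩, hwF⟩
  have hclosed := hK.isClosed_setOf_exists_mem ((isClosed_singleton (x := 0)).preimage hF)
  obtain ⟨w, ⟨⟨hw0, hw1⟩, hwj₀⟩, hw⟩ := hclosed.mem_of_frequently_of_tendsto hweights tendsto_id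
  exact ⟨w none, fun j => w (some j), hw0 _, fun j => hw0 _,
    by rwa [Fintype.sum_option] at hw1, hw, j₀, hwj₀⟩

/-- Lemma 3.13 of the paper. At a Pareto critical point `x⁰` with essentially
active set `{i₁,…,i_l}` that is approached by Pareto critical points with a different
essentially active set, there is a vanishing convex combination
`α∇f(x⁰) + Σ_j β_j ∇g_{i_j}(x⁰) = 0` with `α + Σ_j β_j = 1`, `α, β ≥ 0` and `β_j = 0`
for at least one `j`. -/
theorem stmt10 {n k l : ℕ}
    (f : EuclideanSpace ℝ (Fin n) → ℝ) (hf : ContDiff ℝ 1 f)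
    (g : EuclideanSpace ℝ (Fin n) → ℝ) (hg : Continuous g)
    (gs : Fin k → EuclideanSpace ℝ (Fin n) → ℝ) (hgs : ∀ i, ContDiff ℝ 1 (gs i))
    (hsel : ∀ x, ∃ i, g x = gs i x)
    (Pc : Set (EuclideanSpace ℝ (Fin n)))
    (hPc : Pc = {x | (0 : EuclideanSpace ℝ (Fin n)) ∈ convexHull ℝ
      (insert (gradient f x)
        ((fun i => gradient (gs i) x) '' {i | x ∈ closure (interior {y | g y = gs i y})}))})
    (x0 : EuclideanSpace ℝ (Fin n)) (hx0 : x0 ∈ Pc)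
    (idx : Fin l → Fin k) (hinj : Function.Injective idx)
    (hIe : {i | x0 ∈ closure (interior {y | g y = gs i y})} = Set.range idx)
    (hacc : ∀ U : Set (EuclideanSpace ℝ (Fin n)), IsOpen U → x0 ∈ U →
      ∃ x ∈ Pc ∩ U, {i | x ∈ closure (interior {y | g y = gs i y})}
        ≠ {i | x0 ∈ closure (interior {y | g y = gs i y})}) :
    ∃ (α : ℝ) (β : Fin l → ℝ), 0 ≤ α ∧ (∀ j, 0 ≤ β j) ∧ α + ∑ j, β j = 1 ∧
      α • gradient f x0 + ∑ j, β j • gradient (gs (idx j)) x0 = 0 ∧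
      ∃ j, β j = 0 :=
  stmt10_general f hf g gs hgs Pc hPc x0 idx hIe hacc
end

section
/- Let A ∈ ℝ^{n×n} be symmetric, b ∈ ℝⁿ, and let d₁, …, d_r ∈ ℝⁿ, e ∈ ℝ^r. Define h : ℝⁿ × ℝ × ℝ^r → ℝⁿ × ℝ × ℝ^{r−1} by h(x, α, β) = (α(Ax + b) + Σ_{j=1}^r β_j d_j, α + Σ_{j=1}^r β_j − 1, ((d_j − d₁)ᵀx + e_j − e₁)_{j=2,…,r}). Let (x⁰, α⁰, β⁰) satisfy α⁰ > 0, β⁰_j > 0 for all j, and h(x⁰, α⁰, β⁰) = 0. Let K := ker(Dh(x⁰, α⁰, β⁰)), the kernel of the (Fréchet) derivative of h at (x⁰, α⁰, β⁰), and let pr_x : ℝⁿ × ℝ × ℝ^r → ℝⁿ denote projection onto the first n coordinates. Then there exists an open neighborhood U' of x⁰ in ℝⁿ such that {x ∈ U' : ∃ α > 0 and β ∈ ℝ^r with β_j > 0 for all j and h(x, α, β) = 0} = (x⁰ + pr_x(K)) ∩ U'. -/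
/-!
Since `h` is affine in `x` and in `(α, β)` separately, its only nonlinearity is the product
`α • A x`. Consequently, for any scale `κ ≠ 0` with `κ α = α₀`, `h (x, α, β) = 0` holds exactly
when `Dh (x - x₀, κ (α - α₀), κ (β - β₀)) = 0`. Given a zero with `α > 0`, take `κ = α₀ / α`.
Conversely, a kernel vector `(u, s, t)` with `(s, t)` small gives the zero
`(x₀ + u, α₀ / κ, β₀ + κ⁻¹ t)` with `κ = 1 - s / α₀`, whose multipliers are still positive. To
make "`(s, t)` small" depend only on `u` we lift `u` along a continuous linear section of
`pr_x` restricted to the kernel.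
-/

open Filter Topology

theorem Submodule.exists_continuousLinearMap_rightInvOn_map {𝕜 V W : Type*}
    [NontriviallyNormedField 𝕜] [CompleteSpace 𝕜]
    [AddCommGroup V] [Module 𝕜 V] [TopologicalSpace V] [IsTopologicalAddGroup V]
    [ContinuousSMul 𝕜 V]
    [AddCommGroup W] [Module 𝕜 W] [TopologicalSpace W] [IsTopologicalAddGroup W]
    [ContinuousSMul 𝕜 W] [T2Space W] [FiniteDimensional 𝕜 W]
    (K : Submodule 𝕜 V) (f : V →ₗ[𝕜] W) :
    ∃ g : W →L[𝕜] V, (∀ w, g w ∈ K) ∧ ∀ w ∈ K.map f, f (g w) = w := by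
  obtain ⟨g₀, hg₀⟩ := (f.domRestrict K).rangeRestrict.exists_rightInverse_of_surjective
    (f.domRestrict K).range_rangeRestrict
  obtain ⟨g₁, hg₁⟩ := LinearMap.exists_extend g₀
  refine ⟨(K.subtype ∘ₗ g₁).toContinuousLinearMap, fun w => (g₁ w).2, ?_⟩
  rintro w hw
  rw [← LinearMap.range_domRestrict] at hw
  simpa [← hg₁] using congr_arg Subtype.val (LinearMap.congr_fun hg₀ ⟨w, hw⟩)

section KKT

variable {E F G B : Type*} [NormedAddCommGroup E] [NormedSpace ℝ E] [NormedAddCommGroup F]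
  [NormedSpace ℝ F] [NormedAddCommGroup G] [NormedSpace ℝ G] [NormedAddCommGroup B]
  [NormedSpace ℝ B]
  (T : E →L[ℝ] F) (b : F) (M : B →L[ℝ] F) (σ : B →L[ℝ] ℝ) (L : E →L[ℝ] G) (c : G)

/-- The paper's `h`, with `∇f x = T x + b`, `∑ j, β j • ∇g_j = M β`, `∑ j, β j = σ β` and
`(g_j - g_1)_{j ≥ 2} = L x + c`. -/
def kktMap (p : E × ℝ × B) : F × ℝ × G :=
  (p.2.1 • (T p.1 + b) + M p.2.2, p.2.1 + σ p.2.2 - 1, L p.1 + c)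

theorem fderiv_kktMap_apply (p v : E × ℝ × B) :
    fderiv ℝ (kktMap T b M σ L c) p v =
      (p.2.1 • T v.1 + v.2.1 • (T p.1 + b) + M v.2.2, v.2.1 + σ v.2.2, L v.1) := by
  have hx : HasFDerivAt (fun q : E × ℝ × B => q.1) (ContinuousLinearMap.fst ℝ E (ℝ × B)) p :=
    hasFDerivAt_fst
  have hα : HasFDerivAt (fun q : E × ℝ × B => q.2.1)
      ((ContinuousLinearMap.fst ℝ ℝ B).comp (ContinuousLinearMap.snd ℝ E (ℝ × B))) p :=
    hasFDerivAt_snd.fst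
  have hβ : HasFDerivAt (fun q : E × ℝ × B => q.2.2)
      ((ContinuousLinearMap.snd ℝ ℝ B).comp (ContinuousLinearMap.snd ℝ E (ℝ × B))) p :=
    hasFDerivAt_snd.snd
  have hD : HasFDerivAt (kktMap T b M σ L c) _ p :=
    ((hα.smul ((T.hasFDerivAt.comp p hx).add_const b)).add (M.hasFDerivAt.comp p hβ)).prodMk
      (((hα.add (σ.hasFDerivAt.comp p hβ)).sub_const 1).prodMk
        ((L.hasFDerivAt.comp p hx).add_const c))
  rw [hD.fderiv]
  simp [add_right_comm]

variable {T b M σ L c}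

theorem kktMap_eq_zero_iff_fderiv_eq_zero {x₀ : E} {α₀ : ℝ} {β₀ : B}
    (h₀ : kktMap T b M σ L c (x₀, α₀, β₀) = 0) {κ α : ℝ} (hκ : κ ≠ 0) (hκα : κ * α = α₀)
    (x : E) (β : B) :
    kktMap T b M σ L c (x, α, β) = 0 ↔
      fderiv ℝ (kktMap T b M σ L c) (x₀, α₀, β₀) (x - x₀, κ * (α - α₀), κ • (β - β₀)) = 0 := by
  simp only [kktMap, Prod.mk_eq_zero] at h₀
  obtain ⟨h₁, h₂, h₃⟩ := h₀
  subst hκα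
  have e₁ : (κ * α) • T (x - x₀) + (κ * (α - κ * α)) • (T x₀ + b) + M (κ • (β - β₀)) =
      κ • (α • (T x + b) + M β) := by
    simp only [map_sub, map_smul]
    linear_combination (norm := module) (-κ) • h₁
  have e₂ : κ * (α - κ * α) + σ (κ • (β - β₀)) = κ * (α + σ β - 1) := by
    simp only [map_sub, map_smul, smul_eq_mul]
    linear_combination (-κ) * h₂
  have e₃ : L (x - x₀) = L x + c := by
    rw [map_sub]
    linear_combination (norm := module) -h₃
  rw [fderiv_kktMap_apply, e₁, e₂, e₃]
  simp only [kktMap, Prod.mk_eq_zero, smul_eq_zero, mul_eq_zero, hκ, false_or]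

theorem exists_isOpen_kktMap_zeros_eq_translate_fst_ker [FiniteDimensional ℝ E] {C : Set B}
    (hC : IsOpen C) {x₀ : E} {α₀ : ℝ} {β₀ : B} (hα₀ : 0 < α₀) (hβ₀ : β₀ ∈ C)
    (h₀ : kktMap T b M σ L c (x₀, α₀, β₀) = 0) :
    ∃ U' : Set E, IsOpen U' ∧ x₀ ∈ U' ∧
      {x ∈ U' | ∃ α : ℝ, 0 < α ∧ ∃ β ∈ C, kktMap T b M σ L c (x, α, β) = 0}
        = ((fun y => x₀ + y) ''
            (Prod.fst '' (LinearMap.ker (fderiv ℝ (kktMap T b M σ L c) (x₀, α₀, β₀) :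
              E × ℝ × B →ₗ[ℝ] F × ℝ × G) : Set (E × ℝ × B)))) ∩ U' := by
  set K := LinearMap.ker (fderiv ℝ (kktMap T b M σ L c) (x₀, α₀, β₀) :
    E × ℝ × B →ₗ[ℝ] F × ℝ × G)
  obtain ⟨g, hgK, hg⟩ := K.exists_continuousLinearMap_rightInvOn_map (LinearMap.fst ℝ E (ℝ × B))
  let κ : ℝ × B → ℝ := fun q => 1 - q.1 / α₀
  have hκ₀ : κ 0 = 1 := by simp [κ]
  have hadm : ∀ᶠ q in 𝓝 (0 : ℝ × B),
      κ q ≠ 0 ∧ (α₀ / κ q, β₀ + (κ q)⁻¹ • q.2) ∈ Set.Ioi 0 ×ˢ C := by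
    have hΨ : ContinuousAt (fun q => (α₀ / κ q, β₀ + (κ q)⁻¹ • q.2)) 0 := by
      fun_prop (disch := simp [hκ₀])
    have hκ : Continuous κ := by fun_prop
    exact (hκ.continuousAt.eventually_ne (by simp [hκ₀])).and
      (hΨ.eventually_mem ((isOpen_Ioi.prod hC).mem_nhds (by simp [hκ₀, hα₀, hβ₀])))
  have hlift : Tendsto (fun x => (g (x - x₀)).2) (𝓝 x₀) (𝓝 0) := by
    simpa using ((g.continuous.comp (continuous_sub_right x₀)).snd).tendsto x₀
  obtain ⟨U', hU'adm, hU'open, hx₀U'⟩ := mem_nhds_iff.1 (hlift.eventually hadm)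
  refine ⟨U', hU'open, hx₀U', Set.ext fun x => ⟨?_, ?_⟩⟩
  · rintro ⟨hxU', α, hα, β, -, hx⟩
    have hκα : α₀ / α * α = α₀ := div_mul_cancel₀ α₀ hα.ne'
    exact ⟨⟨_, ⟨_, (kktMap_eq_zero_iff_fderiv_eq_zero h₀ (by positivity) hκα x β).1 hx, rfl⟩,
      add_sub_cancel x₀ x⟩, hxU'⟩
  · rintro ⟨⟨u, ⟨v, hv, rfl⟩, rfl⟩, hxU'⟩
    obtain ⟨hκv, hα, hβ⟩ := hU'adm hxU'
    simp only [add_sub_cancel_left] at hκv hα hβ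
    refine ⟨hxU', _, hα, _, hβ,
      (kktMap_eq_zero_iff_fderiv_eq_zero h₀ hκv (mul_div_cancel₀ α₀ hκv) _ _).2 ?_⟩
    have hw : (g v.1).1 = v.1 := hg v.1 ⟨v, hv, rfl⟩
    refine (congrArg (fderiv ℝ (kktMap T b M σ L c) (x₀, α₀, β₀)) ?_).trans (hgK v.1)
    ext
    · simp [hw]
    · rw [mul_sub, mul_div_cancel₀ _ hκv]
      simp only [κ]
      field_simp
      ring
    · simp [hκv]

end KKT

/-- Remark SM3 of the paper. For a quadratic objective (gradient `Ax + b`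
with `A` symmetric) and affinely linear selection functions `g_j(x) = d_jᵀx + e_j`, near a
zero `(x⁰,α⁰,β⁰)` of `h` with positive multipliers, the set
`{x : ∃ α > 0, β > 0, h(x,α,β) = 0}` agrees locally with the translate
`x⁰ + pr_x(ker Dh(x⁰,α⁰,β⁰))`. -/
theorem stmt11 {n r : ℕ} (hr : 0 < r)
    (A : Matrix (Fin n) (Fin n) ℝ)
    (b : Fin n → ℝ) (d : Fin r → Fin n → ℝ) (e : Fin r → ℝ)
    (h : (Fin n → ℝ) × ℝ × (Fin r → ℝ) → (Fin n → ℝ) × ℝ × (Fin (r - 1) → ℝ))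
    (hh : h = fun p =>
      (p.2.1 • (A.mulVec p.1 + b) + ∑ j, p.2.2 j • d j,
       p.2.1 + ∑ j, p.2.2 j - 1,
       fun j : Fin (r - 1) =>
         (∑ i, (d ⟨j.1 + 1, by have := j.isLt; omega⟩ i - d ⟨0, hr⟩ i) * p.1 i)
           + e ⟨j.1 + 1, by have := j.isLt; omega⟩ - e ⟨0, hr⟩))
    (x0 : Fin n → ℝ) (α0 : ℝ) (β0 : Fin r → ℝ)
    (hα0 : 0 < α0) (hβ0 : ∀ j, 0 < β0 j)
    (hzero : h (x0, α0, β0) = 0) :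
    ∃ U' : Set (Fin n → ℝ), IsOpen U' ∧ x0 ∈ U' ∧
      {x ∈ U' | ∃ α : ℝ, 0 < α ∧ ∃ β : Fin r → ℝ, (∀ j, 0 < β j) ∧ h (x, α, β) = 0}
        = ((fun y => x0 + y) ''
            (Prod.fst '' (LinearMap.ker (fderiv ℝ h (x0, α0, β0) :
                (Fin n → ℝ) × ℝ × (Fin r → ℝ) →ₗ[ℝ] (Fin n → ℝ) × ℝ × (Fin (r - 1) → ℝ)) :
              Set ((Fin n → ℝ) × ℝ × (Fin r → ℝ))))) ∩ U' := by
  obtain rfl : h = kktMap (Matrix.mulVecLin A).toContinuousLinearMap b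
      (Fintype.linearCombination ℝ d).toContinuousLinearMap (∑ j, ContinuousLinearMap.proj j)
      (Matrix.mulVecLin (Matrix.of fun (j : Fin (r - 1)) i =>
        d ⟨j.1 + 1, by omega⟩ i - d ⟨0, hr⟩ i)).toContinuousLinearMap
      (fun j => e ⟨j.1 + 1, by omega⟩ - e ⟨0, hr⟩) := by
    funext p
    simp [hh, kktMap, Fintype.linearCombination_apply, add_sub_assoc, funext_iff, Matrix.mulVec,
      dotProduct]
  have hC : IsOpen {β : Fin r → ℝ | ∀ j, 0 < β j} := by
    simpa only [Set.ofPred_forall] using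
      isOpen_iInter_of_finite fun j => isOpen_lt continuous_const (continuous_apply j)
  exact exists_isOpen_kktMap_zeros_eq_translate_fst_ker hC hα0 hβ0 hzero
end

section
/- Let g : ℝⁿ → ℝ be convex and let A : ℝⁿ → ℝ be an affine map. Let V := interior({x ∈ ℝⁿ : g(x) = A(x)}), let y ∈ V and let z ∈ ℝⁿ with g(z) = A(z). Then g((1−λ)·y + λ·z) = A((1−λ)·y + λ·z) for every λ ∈ [0,1]. -/
/-!
`g - A` is convex and vanishes on a neighbourhood of `y`, so `y` is a local, hence global,
minimum of it: `A ≤ g` everywhere. Conversely, convexity of `g - A` along the segment `[y, z]`,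
whose endpoints are zeros of `g - A`, gives `g ≤ A` there.
-/

open Set Filter Topology

lemma AffineMap.concaveOn {𝕜 E F : Type*} [Ring 𝕜] [PartialOrder 𝕜] [AddCommGroup E]
    [Module 𝕜 E] [AddCommGroup F] [PartialOrder F] [Module 𝕜 F] (A : E →ᵃ[𝕜] F) {s : Set E}
    (hs : Convex 𝕜 s) : ConcaveOn 𝕜 s A :=
  ⟨hs, fun _ _ _ _ _ _ _ _ hab => (Convex.combo_affine_apply hab).ge⟩

lemma ConvexOn.le_affineMap_of_mem_segment {𝕜 E : Type*} [Field 𝕜] [LinearOrder 𝕜]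
    [IsStrictOrderedRing 𝕜] [AddCommGroup E] [Module 𝕜 E] {g : E → 𝕜} {s : Set E}
    (hg : ConvexOn 𝕜 s g) (A : E →ᵃ[𝕜] 𝕜) {x y z : E} (hx : x ∈ s) (hy : y ∈ s)
    (hgx : g x ≤ A x) (hgy : g y ≤ A y) (hz : z ∈ segment 𝕜 x y) : g z ≤ A z :=
  sub_nonpos.1 <| ((hg.sub (A.concaveOn hg.1)).le_on_segment hx hy hz).trans
    (max_le (sub_nonpos.2 hgx) (sub_nonpos.2 hgy))

lemma ConvexOn.affineMap_le_of_eventuallyEq {E : Type*} [AddCommGroup E] [TopologicalSpace E]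
    [Module ℝ E] [IsTopologicalAddGroup E] [ContinuousSMul ℝ E] {g : E → ℝ}
    (hg : ConvexOn ℝ univ g) (A : E →ᵃ[ℝ] ℝ) {y : E} (hgA : g =ᶠ[𝓝 y] A) (x : E) :
    A x ≤ g x := by
  have hmin : IsLocalMin (g - ⇑A) y := by
    filter_upwards [hgA] with w hw
    simp [hw, hgA.eq_of_nhds]
  have := IsMinOn.of_isLocalMin_of_convex_univ hmin (hg.sub (A.concaveOn convex_univ)) x
  simpa [hgA.eq_of_nhds] using this

/-- Key step of Remark SM5 (SVM). For a convex `g` and an affine map `A`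
agreeing with `g` on an open set containing `y`, and `z` with `g z = A z`, the functions
`g` and `A` agree along the whole segment from `y` to `z`. -/
theorem stmt12 {n : ℕ} (g : EuclideanSpace ℝ (Fin n) → ℝ)
    (hg : ConvexOn ℝ Set.univ g)
    (A : EuclideanSpace ℝ (Fin n) →ᵃ[ℝ] ℝ)
    (y : EuclideanSpace ℝ (Fin n)) (hy : y ∈ interior {x | g x = A x})
    (z : EuclideanSpace ℝ (Fin n)) (hz : g z = A z)
    (lam : ℝ) (hlam : lam ∈ Set.Icc (0 : ℝ) 1) :
    g ((1 - lam) • y + lam • z) = A ((1 - lam) • y + lam • z) := by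
  have hgA : g =ᶠ[𝓝 y] A := mem_interior_iff_mem_nhds.1 hy
  have hseg : (1 - lam) • y + lam • z ∈ segment ℝ y z :=
    ⟨1 - lam, lam, by linarith [hlam.2], hlam.1, by ring, rfl⟩
  exact le_antisymm
    (hg.le_affineMap_of_mem_segment A (mem_univ y) (mem_univ z) hgA.eq_of_nhds.le hz.le hseg)
    (hg.affineMap_le_of_eventuallyEq A hgA _)
end

section
/- Let c¹₁, …, c¹_p : ℝⁿ → ℝ and c²₁, …, c²_q : ℝⁿ → ℝ be C¹ functions, define g(x) = Σ_{i=1}^p max(c¹_i(x), 0) + Σ_{j=1}^q |c²_j(x)| and, for θ ∈ {0,1}^p, σ ∈ {−1,1}^q, g_{θ,σ}(x) = Σ_{i=1}^p θ_i c¹_i(x) + Σ_{j=1}^q σ_j c²_j(x). Fix x ∈ ℝⁿ and assume the family of gradients {∇c¹_i(x) : i with c¹_i(x) = 0} ∪ {∇c²_j(x) : j with c²_j(x) = 0} is linearly independent (LICQ). Then for every (θ, σ) with g(x) = g_{θ,σ}(x), one has x ∈ closure(interior({y ∈ ℝⁿ : g(y) = g_{θ,σ}(y)})). -/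
/-! Put `s = 2θ - 1` on the inequality constraints and `s = σ` on the equality constraints.
Termwise, `max c 0 ≥ θ c` and `|c| ≥ σ c`, with equality iff `s c ≥ 0`; hence `g = g_{θ,σ}`
exactly on the closed orthant `{y | ∀ k, 0 ≤ s_k c_k y}`, whose interior contains the open
orthant where all these inequalities are strict. Near `x` the inactive constraints stay strict,
and by LICQ the active ones form a submersion at `x`, which is open at `x` and so attains the
values `t • s`, `t > 0` small, arbitrarily close to `x`. -/

open Filter Topology

section Selection

variable {a θ σ : ℝ}

lemma mul_le_max_zero (hθ : θ = 0 ∨ θ = 1) : θ * a ≤ max a 0 := by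
  rcases hθ with rfl | rfl <;> simp

lemma max_zero_eq_mul_iff (hθ : θ = 0 ∨ θ = 1) : max a 0 = θ * a ↔ 0 ≤ (2 * θ - 1) * a := by
  rcases hθ with rfl | rfl <;> norm_num

lemma mul_le_abs (hσ : σ = -1 ∨ σ = 1) : σ * a ≤ |a| := by
  rcases hσ with rfl | rfl <;> simp [neg_le_abs, le_abs_self]

lemma abs_eq_mul_iff (hσ : σ = -1 ∨ σ = 1) : |a| = σ * a ↔ 0 ≤ σ * a := by
  rcases hσ with rfl | rfl <;> simp [abs_eq_neg_self, abs_eq_self]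

end Selection

def selectionSign {ι κ : Type*} (θ : ι → ℝ) (σ : κ → ℝ) : ι ⊕ κ → ℝ :=
  Sum.elim (fun i => 2 * θ i - 1) σ

lemma selectionSign_ne_zero {ι κ : Type*} {θ : ι → ℝ} {σ : κ → ℝ} (hθ : ∀ i, θ i = 0 ∨ θ i = 1)
    (hσ : ∀ j, σ j = -1 ∨ σ j = 1) (k : ι ⊕ κ) : selectionSign θ σ k ≠ 0 := by
  rcases k with i | j
  · rcases hθ i with h | h <;> norm_num [selectionSign, h]
  · rcases hσ j with h | h <;> norm_num [selectionSign, h]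

lemma penalty_eq_selection_iff {ι κ : Type*} [Fintype ι] [Fintype κ] (a : ι → ℝ) (b : κ → ℝ)
    {θ : ι → ℝ} (hθ : ∀ i, θ i = 0 ∨ θ i = 1) {σ : κ → ℝ} (hσ : ∀ j, σ j = -1 ∨ σ j = 1) :
    (∑ i, max (a i) 0) + ∑ j, |b j| = (∑ i, θ i * a i) + ∑ j, σ j * b j ↔
      ∀ k, 0 ≤ selectionSign θ σ k * Sum.elim a b k := by
  rw [eq_comm, add_eq_add_iff_eq_and_eq (Finset.sum_le_sum fun i _ => mul_le_max_zero (hθ i))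
    (Finset.sum_le_sum fun j _ => mul_le_abs (hσ j)),
    Finset.sum_eq_sum_iff_of_le fun i _ => mul_le_max_zero (hθ i),
    Finset.sum_eq_sum_iff_of_le fun j _ => mul_le_abs (hσ j), Sum.forall]
  simp [selectionSign, eq_comm (a := _ * _), max_zero_eq_mul_iff (hθ _), abs_eq_mul_iff (hσ _)]

lemma LinearIndependent.surjective_inner {E ι : Type*} [NormedAddCommGroup E]
    [InnerProductSpace ℝ E] [Finite ι] {v : ι → E} (hv : LinearIndependent ℝ v) :
    Function.Surjective fun (y : E) k => inner ℝ (v k) y := by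
  have hli : LinearIndependent ℝ fun k (y : E) => inner ℝ (v k) y := by
    refine hv.map' (LinearMap.ltoFun ℝ E ℝ ℝ ∘ₗ innerₗ E) (LinearMap.ker_eq_bot'.2 fun w hw => ?_)
    simpa using congrFun hw w
  have hspan := span_flip_eq_top_iff_linearIndependent.2 hli
  rw [show Set.range (flip fun k (y : E) => inner ℝ (v k) y) =
      LinearMap.range (LinearMap.pi fun k => innerₗ E (v k)) from rfl, Submodule.span_eq] at hspan
  exact LinearMap.range_eq_top.1 hspan

lemma mem_closure_preimage_of_map_nhds_eq {X Y : Type*} [TopologicalSpace X] [TopologicalSpace Y]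
    {f : X → Y} {x : X} {U : Set Y} (hf : map f (𝓝 x) = 𝓝 (f x)) (hU : f x ∈ closure U) :
    x ∈ closure (f ⁻¹' U) := by
  rw [mem_closure_iff_nhdsWithin_neBot, nhdsWithin, ← hf, ← map_inf_principal_preimage] at hU
  exact mem_closure_iff_nhdsWithin_neBot.2 hU.of_map

lemma zero_mem_closure_setOf_forall_pos_mul {ι : Type*} {s : ι → ℝ} (hs : ∀ k, s k ≠ 0) :
    (0 : ι → ℝ) ∈ closure {v | ∀ k, 0 < s k * v k} := by
  have hlim : Tendsto (fun t : ℝ => t • s) (𝓝[>] 0) (𝓝 0) := by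
    simpa using (tendsto_id.smul_const s).mono_left (nhdsWithin_le_nhds (a := (0 : ℝ)))
  refine mem_closure_of_tendsto hlim (eventually_nhdsWithin_of_forall fun t (ht : 0 < t) k => ?_)
  simpa [mul_left_comm] using mul_pos ht (mul_self_pos.2 (hs k))

section Submersion

variable {E : Type*} [NormedAddCommGroup E] [InnerProductSpace ℝ E] [CompleteSpace E]
  {ι : Type*} [Fintype ι] {c : ι → E → ℝ} {x : E} {s : ι → ℝ}

lemma mem_closure_setOf_forall_pos_of_eq_zero (hc : ∀ k, ContDiffAt ℝ 1 (c k) x)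
    (hcx : ∀ k, c k x = 0) (hLI : LinearIndependent ℝ fun k => gradient (c k) x)
    (hs : ∀ k, s k ≠ 0) : x ∈ closure {y | ∀ k, 0 < s k * c k y} := by
  have hF : HasStrictFDerivAt (fun y k => c k y)
      (ContinuousLinearMap.pi fun k => fderiv ℝ (c k) x) x :=
    hasStrictFDerivAt_pi.2 fun k => (hc k).hasStrictFDerivAt one_ne_zero
  have hsurj : LinearMap.range
      (ContinuousLinearMap.pi fun k => fderiv ℝ (c k) x : E →ₗ[ℝ] ι → ℝ) = ⊤ := by
    refine LinearMap.range_eq_top.2 fun v => ?_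
    obtain ⟨y, hy⟩ := hLI.surjective_inner v
    exact ⟨y, by rw [← hy]; ext k; simp [gradient]⟩
  refine mem_closure_preimage_of_map_nhds_eq (U := {v : ι → ℝ | ∀ k, 0 < s k * v k})
    (hF.map_nhds_eq_of_surj hsurj) ?_
  convert zero_mem_closure_setOf_forall_pos_mul hs
  exact hcx _

lemma mem_closure_setOf_forall_pos_of_nonneg (hc : ∀ k, ContDiffAt ℝ 1 (c k) x) (hs : ∀ k, s k ≠ 0)
    (hx : ∀ k, 0 ≤ s k * c k x)
    (hLICQ : LinearIndependent ℝ fun k : {k // c k x = 0} => gradient (c k) x) :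
    x ∈ closure {y | ∀ k, 0 < s k * c k y} := by
  have hinactive : ∀ᶠ y in 𝓝 x, ∀ k : {k // c k x ≠ 0}, 0 < s k * c k y :=
    eventually_all.2 fun k : {k // c k x ≠ 0} =>
      (continuousAt_const.mul (hc k).continuousAt).eventually
        (lt_mem_nhds ((hx k).lt_of_ne (mul_ne_zero (hs k) k.2).symm))
  have hactive := mem_closure_setOf_forall_pos_of_eq_zero
    (c := fun k : {k // c k x = 0} => c k) (fun k => hc k) (fun k => k.2) hLICQ (fun k => hs k)
  rw [mem_closure_iff_nhdsWithin_neBot, nhdsWithin_restrict' _ hinactive] at hactive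
  refine mem_closure_iff_nhdsWithin_neBot.2 (hactive.mono (nhdsWithin_mono _ ?_))
  rintro y ⟨hya, hyi⟩ k
  by_cases hk : c k x = 0
  exacts [hya ⟨k, hk⟩, hyi ⟨k, hk⟩]

end Submersion

/-- Main claim of Remark SM6 (exact penalty method). Under LICQ at `x`
(linear independence of the gradients of the active constraints), every selection function
`g_{θ,σ}` of the exact ℓ¹ penalty term `g` that is active at `x` is essentially active:
`x ∈ closure (interior {y | g y = g_{θ,σ} y})`. -/
theorem stmt16 {n p q : ℕ}
    (c1 : Fin p → EuclideanSpace ℝ (Fin n) → ℝ) (hc1 : ∀ i, ContDiff ℝ 1 (c1 i))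
    (c2 : Fin q → EuclideanSpace ℝ (Fin n) → ℝ) (hc2 : ∀ j, ContDiff ℝ 1 (c2 j))
    (g : EuclideanSpace ℝ (Fin n) → ℝ)
    (hg : g = fun y => (∑ i, max (c1 i y) 0) + ∑ j, |c2 j y|)
    (x : EuclideanSpace ℝ (Fin n))
    (hLICQ : LinearIndependent ℝ
      (Sum.elim (fun i : {i : Fin p // c1 i x = 0} => gradient (c1 i.1) x)
        (fun j : {j : Fin q // c2 j x = 0} => gradient (c2 j.1) x)))
    (θ : Fin p → ℝ) (hθ : ∀ i, θ i = 0 ∨ θ i = 1)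
    (σ : Fin q → ℝ) (hσ : ∀ j, σ j = -1 ∨ σ j = 1)
    (hact : g x = (∑ i, θ i * c1 i x) + ∑ j, σ j * c2 j x) :
    x ∈ closure (interior {y | g y = (∑ i, θ i * c1 i y) + ∑ j, σ j * c2 j y}) := by
  set c := Sum.elim c1 c2
  set s := selectionSign θ σ
  have hsel (y) : g y = (∑ i, θ i * c1 i y) + ∑ j, σ j * c2 j y ↔ ∀ k, 0 ≤ s k * c k y := by
    simp only [hg, penalty_eq_selection_iff _ _ hθ hσ, Sum.forall]
    rfl
  have hc : ∀ k, ContDiff ℝ 1 (c k) := Sum.forall.2 ⟨hc1, hc2⟩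
  have hLICQ' : LinearIndependent ℝ fun k : {k // c k x = 0} => gradient (c k) x := by
    convert hLICQ.comp _ (Equiv.subtypeSum (p := fun k => c k x = 0)).injective using 1
    ext ⟨k | k, hk⟩ <;> rfl
  have hopen : IsOpen {y | ∀ k, 0 < s k * c k y} := by
    simp only [Set.ofPred_forall]
    exact isOpen_iInter_of_finite fun k =>
      isOpen_lt continuous_const (continuous_const.mul (hc k).continuous)
  refine closure_mono (interior_maximal (fun y hy => (hsel y).2 fun k => (hy k).le) hopen) ?_
  exact mem_closure_setOf_forall_pos_of_nonneg (fun k => (hc k).contDiffAt)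
    (selectionSign_ne_zero hθ hσ) ((hsel x).1 hact) hLICQ'
end
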